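/- Let t ≥ 2 and m ≥ 1 be integers, and let λ be a (t, mt+1)-core partition with distinct parts whose size is maximal among all (t, mt+1)-core partitions with distinct parts. Then for every 1 ≤ i ≤ t−1, n_i(λ) = 0 or n_i(λ) = m. -/

import Mathlib

/-!
In the language of β-sets: `λ` is an `s`-core iff its β-set `B` is closed under `x ↦ x - s`,
it has distinct parts iff `B` contains no two consecutive integers, and
`|λ| = ∑ B - (0 + 1 + ⋯ + (|B| - 1))`. Closure under `x ↦ x - t` makes the elements of `B`
that are `≡ i (mod t)` the progression `i, i + t, …, i + (nᵢ - 1)t`, and closure under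
`x ↦ x - (mt + 1)` then forces `nᵢ ≤ m`, so `B ⊆ [1, mt)`. If `0 < nᵢ < m`, both adding the
bead `w = i + nᵢt` and removing the bead `w - t` give β-sets of the same kind (the
`(mt + 1)`-condition is vacuous below `mt`), and the sizes of the two resulting partitions add
up to `2|λ| + t - 1 > 2|λ|`, so one of them is larger than `λ`.
-/

/-- A partition: a finite weakly decreasing list of positive integers. -/
structure Partn where
  parts : List ℕ
  pos : ∀ p ∈ parts, 0 < p
  sorted : parts.Pairwise (· ≥ ·)

namespace Partn

/-- The size of a partition: the sum of its parts. -/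
def size (l : Partn) : ℕ := l.parts.sum

/-- The number of rows `k` (0-indexed) with `λ_k ≥ j` (the length of column `j`). -/
def colLen (l : Partn) (j : ℕ) : ℕ := (l.parts.filter (fun p => j ≤ p)).length

/-- The hook length of the box in row `i` (0-indexed) and column `j` (1-indexed):
`λ_i − j + #{k : λ_k ≥ j} − i + 1` (with 1-indexed rows). -/
def hook (l : Partn) (i j : ℕ) : ℕ :=
  (l.parts.getD i 0 - j) + (l.colLen j - (i + 1)) + 1

/-- A partition is a `t`-core if none of its hook lengths is divisible by `t`. -/
def IsCore (t : ℕ) (l : Partn) : Prop :=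
  ∀ i j : ℕ, i < l.parts.length → 1 ≤ j → j ≤ l.parts.getD i 0 → ¬ (t ∣ l.hook i j)

/-- A partition has distinct parts if its parts are strictly decreasing. -/
def DistinctParts (l : Partn) : Prop := l.parts.Pairwise (· > ·)

/-- The β-set of a partition: `{λ_i + ℓ − i : 1 ≤ i ≤ ℓ}` (1-indexed). -/
def betaSet (l : Partn) : Finset ℕ :=
  (Finset.range l.parts.length).image
    (fun i => l.parts.getD i 0 + (l.parts.length - 1 - i))

/-- `nFn t i l` is the number of elements of the β-set of `l` congruent to `i` mod `t`. -/
def nFn (t i : ℕ) (l : Partn) : ℕ :=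
  (l.betaSet.filter (fun x => x % t = i)).card

end Partn

lemma List.lt_length_filter_le_iff {L : List ℕ} (hL : L.Pairwise (· ≥ ·)) {j k : ℕ} :
    k < (L.filter (j ≤ ·)).length ↔ ∃ hk : k < L.length, j ≤ L[k] := by
  induction L generalizing k with
  | nil => simp
  | cons a L ih =>
    rw [List.pairwise_cons] at hL
    by_cases hja : j ≤ a
    · cases k with
      | zero => simp [hja]
      | succ k => simp [hja, ih hL.2]
    · have hle : ∀ p ∈ a :: L, p ≤ a := by simpa using hL.1
      have hnil : (a :: L).filter (j ≤ ·) = [] :=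
        List.filter_eq_nil_iff.mpr fun p hp h => hja ((decide_eq_true_iff.mp h).trans (hle p hp))
      simp only [hnil, List.length_nil, Nat.not_lt_zero, false_iff, not_exists]
      exact fun _ h => hja (h.trans (hle _ (List.getElem_mem _)))

namespace Partn

def SubClosed (t : ℕ) (B : Finset ℕ) : Prop := ∀ x ∈ B, t ≤ x → x - t ∈ B

namespace SubClosed

variable {t : ℕ} {B : Finset ℕ}

lemma sub_mul_mem (hB : SubClosed t B) {x : ℕ} (hx : x ∈ B) (q : ℕ) (hq : q * t ≤ x) :
    x - q * t ∈ B := by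
  induction q with
  | zero => simpa using hx
  | succ q ih =>
    rw [Nat.succ_mul] at hq ⊢
    rw [← Nat.sub_sub]
    exact hB _ (ih (by omega)) (by omega)

lemma add_mul_mem_of_le (hB : SubClosed t B) {j a b : ℕ} (h : j + a * t ∈ B) (hba : b ≤ a) :
    j + b * t ∈ B := by
  have hle := Nat.mul_le_mul_right t hba
  have := hB.sub_mul_mem h (a - b) (by rw [Nat.sub_mul]; omega)
  rwa [Nat.sub_mul, show j + a * t - (a * t - b * t) = j + b * t by omega] at this

lemma add_mul_mem_iff (hB : SubClosed t B) {j : ℕ} (hj : j < t) (a : ℕ) :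
    j + a * t ∈ B ↔ a < (B.filter (· % t = j)).card := by
  have hmod : ∀ x, x % t = j → j + x / t * t = x := fun x hx => by
    rw [← hx, mul_comm]; exact Nat.mod_add_div x t
  have hinj : Function.Injective fun b => j + b * t := fun b c h => by
    simpa [show t ≠ 0 by omega] using h
  constructor
  · intro ha
    have hsub : (Finset.range (a + 1)).image (fun b => j + b * t) ⊆ B.filter (· % t = j) := by
      simp only [Finset.subset_iff, Finset.mem_image, Finset.mem_range, Finset.mem_filter]
      rintro _ ⟨b, hb, rfl⟩
      exact ⟨hB.add_mul_mem_of_le ha (by omega), by simp [Nat.mod_eq_of_lt hj]⟩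
    have := Finset.card_le_card hsub
    rw [Finset.card_image_of_injective _ hinj, Finset.card_range] at this
    omega
  · intro ha
    by_contra hmem
    have hsub : B.filter (· % t = j) ⊆ (Finset.range a).image (fun b => j + b * t) := by
      simp only [Finset.subset_iff, Finset.mem_image, Finset.mem_range, Finset.mem_filter]
      rintro x ⟨hx, hxj⟩
      refine ⟨x / t, ?_, hmod x hxj⟩
      by_contra! hle
      exact hmem (hB.add_mul_mem_of_le ((hmod x hxj).symm ▸ hx) hle)
    have := Finset.card_le_card hsub
    rw [Finset.card_image_of_injective _ hinj, Finset.card_range] at this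
    omega

lemma insert {w : ℕ} (hB : SubClosed t B) (hw : t ≤ w → w - t ∈ B) :
    SubClosed t (insert w B) := by
  simp only [SubClosed, Finset.forall_mem_insert]
  exact ⟨fun h => Finset.mem_insert_of_mem (hw h),
    fun x hx htx => Finset.mem_insert_of_mem (hB x hx htx)⟩

lemma erase {y : ℕ} (hB : SubClosed t B) (hy : y + t ∉ B) :
    SubClosed t (B.erase y) := fun x hx htx => by
  obtain ⟨-, hxB⟩ := Finset.mem_erase.mp hx
  refine Finset.mem_erase.mpr ⟨fun h => hy ?_, hB x hxB htx⟩
  rwa [← h, Nat.sub_add_cancel htx]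

end SubClosed

section

variable (l : Partn)

lemma getElem_pos {i : ℕ} (hi : i < l.parts.length) : 0 < l.parts[i] :=
  l.pos _ (List.getElem_mem hi)

lemma getElem_le_getElem {i k : ℕ} (hik : i ≤ k) (hk : k < l.parts.length) :
    l.parts[k] ≤ l.parts[i] := by
  rcases hik.eq_or_lt with rfl | hik
  · rfl
  · exact List.pairwise_iff_getElem.mp l.sorted i k _ hk hik

def beta (i : ℕ) : ℕ := l.parts.getD i 0 + (l.parts.length - 1 - i)

lemma beta_of_lt {i : ℕ} (hi : i < l.parts.length) :
    l.beta i = l.parts[i] + (l.parts.length - 1 - i) := by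
  rw [beta, List.getD_eq_getElem]

lemma betaSet_eq_image : l.betaSet = (Finset.range l.parts.length).image l.beta := rfl

lemma mem_betaSet {x : ℕ} : x ∈ l.betaSet ↔ ∃ i < l.parts.length, l.beta i = x := by
  simp [betaSet_eq_image]

lemma beta_mem_betaSet {i : ℕ} (hi : i < l.parts.length) : l.beta i ∈ l.betaSet :=
  l.mem_betaSet.mpr ⟨i, hi, rfl⟩

lemma beta_lt_beta {i k : ℕ} (hik : i < k) (hk : k < l.parts.length) : l.beta k < l.beta i := by
  rw [l.beta_of_lt hk, l.beta_of_lt (hik.trans hk)]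
  have := l.getElem_le_getElem hik.le hk
  omega

lemma beta_strictAntiOn : StrictAntiOn l.beta (Set.Iio l.parts.length) :=
  fun _ _ _ hk hik => l.beta_lt_beta hik hk

lemma card_betaSet : l.betaSet.card = l.parts.length := by
  rw [betaSet_eq_image, Finset.card_image_of_injOn, Finset.card_range]
  simpa using l.beta_strictAntiOn.injOn

lemma zero_notMem_betaSet : 0 ∉ l.betaSet := by
  rw [mem_betaSet]
  rintro ⟨i, hi, h⟩
  have := l.getElem_pos hi
  rw [l.beta_of_lt hi] at h
  omega

lemma sum_betaSet : ∑ x ∈ l.betaSet, x = l.size + ∑ i ∈ Finset.range l.parts.length, i := by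
  have hsize : ∑ i ∈ Finset.range l.parts.length, l.parts.getD i 0 = l.size := by
    rw [← Fin.sum_univ_eq_sum_range (fun i => l.parts.getD i 0), size, ← Fin.sum_univ_getElem]
    simp only [List.getD_eq_getElem, Fin.is_lt]
  rw [betaSet_eq_image, Finset.sum_image (by simpa using l.beta_strictAntiOn.injOn),
    ← Finset.sum_range_reflect (fun i => i), ← hsize, ← Finset.sum_add_distrib]
  rfl

lemma card_filter_lt_beta {i : ℕ} (hi : i < l.parts.length) :
    (l.betaSet.filter (· < l.beta i)).card = l.parts.length - 1 - i := by
  have hfilter : (Finset.range l.parts.length).filter (fun k => l.beta k < l.beta i)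
      = Finset.Ioo i l.parts.length := by
    ext k
    simp only [Finset.mem_filter, Finset.mem_range, Finset.mem_Ioo]
    exact ⟨fun ⟨hk, h⟩ => ⟨(l.beta_strictAntiOn.lt_iff_gt hk hi).mp h, hk⟩,
      fun ⟨h, hk⟩ => ⟨hk, l.beta_lt_beta h hk⟩⟩
  rw [betaSet_eq_image, Finset.filter_image, hfilter, Finset.card_image_of_injOn, Nat.card_Ioo]
  · omega
  · exact l.beta_strictAntiOn.injOn.mono (by intro; simp)

lemma colLen_le_length (j : ℕ) : l.colLen j ≤ l.parts.length := List.length_filter_le _ _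

lemma lt_colLen_iff {j k : ℕ} (hk : k < l.parts.length) :
    k < l.colLen j ↔ j ≤ l.parts[k] := by
  simp [colLen, List.lt_length_filter_le_iff l.sorted, hk]

lemma colLen_antitone : Antitone l.colLen := fun a b hab => by
  simp only [colLen, ← List.countP_eq_length_filter]
  exact List.countP_mono_left fun p _ h => by simp only [decide_eq_true_eq] at h ⊢; omega

-- The gap of the β-set belonging to column `j`: the hook lengths in row `i` are the distances
-- from `beta i` down to the gaps below it.
def colGap (j : ℕ) : ℕ := l.parts.length - l.colLen j + (j - 1)

lemma colGap_notMem_betaSet {j : ℕ} (hj : 1 ≤ j) : l.colGap j ∉ l.betaSet := by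
  rw [mem_betaSet]
  rintro ⟨k, hk, h⟩
  have hc := l.colLen_le_length j
  have hkc := l.lt_colLen_iff (j := j) hk
  rw [l.beta_of_lt hk, colGap] at h
  by_cases hjk : j ≤ l.parts[k] <;> simp only [hjk, iff_true, iff_false] at hkc <;> omega

lemma colGap_lt_colGap {a b : ℕ} (ha : 1 ≤ a) (hab : a < b) : l.colGap a < l.colGap b := by
  have := l.colLen_antitone hab.le
  have := l.colLen_le_length a
  simp only [colGap]
  omega

lemma beta_eq_hook_add_colGap {i j : ℕ} (hi : i < l.parts.length) (hj1 : 1 ≤ j)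
    (hj : j ≤ l.parts[i]) :
    l.beta i = l.hook i j + l.colGap j := by
  have := (l.lt_colLen_iff hi).mpr hj
  have := l.colLen_le_length j
  rw [l.beta_of_lt hi, hook, colGap, List.getD_eq_getElem _ _ hi]
  omega

lemma card_filter_notMem_betaSet {i : ℕ} (hi : i < l.parts.length) :
    ((Finset.range (l.beta i)).filter (· ∉ l.betaSet)).card = l.parts[i] := by
  have hsplit := Finset.card_filter_add_card_filter_not (s := Finset.range (l.beta i))
    (· ∈ l.betaSet)
  have hmem : (Finset.range (l.beta i)).filter (· ∈ l.betaSet)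
      = l.betaSet.filter (· < l.beta i) := by
    ext; simp [and_comm]
  rw [hmem, l.card_filter_lt_beta hi, Finset.card_range] at hsplit
  have := l.beta_of_lt hi
  omega

lemma exists_colGap_eq {i y : ℕ} (hi : i < l.parts.length) (hy : y < l.beta i)
    (hyB : y ∉ l.betaSet) : ∃ j, 1 ≤ j ∧ j ≤ l.parts[i] ∧ l.colGap j = y := by
  have hsub : (Finset.Icc 1 l.parts[i]).image l.colGap
      ⊆ (Finset.range (l.beta i)).filter (· ∉ l.betaSet) := by
    simp only [Finset.subset_iff, Finset.mem_image, Finset.mem_Icc, Finset.mem_filter,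
      Finset.mem_range]
    rintro _ ⟨j, ⟨hj1, hj⟩, rfl⟩
    have := l.beta_eq_hook_add_colGap hi hj1 hj
    exact ⟨by unfold hook at this; omega, l.colGap_notMem_betaSet hj1⟩
  have hinj : Set.InjOn l.colGap (Finset.Icc 1 l.parts[i]) :=
    StrictMonoOn.injOn fun a ha _ _ hab => l.colGap_lt_colGap (Finset.mem_Icc.mp ha).1 hab
  have heq := Finset.eq_of_subset_of_card_le hsub (by
    rw [l.card_filter_notMem_betaSet hi, Finset.card_image_of_injOn hinj, Nat.card_Icc]; omega)
  have hyG : y ∈ (Finset.range (l.beta i)).filter (· ∉ l.betaSet) := by simp [hy, hyB]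
  rw [← heq] at hyG
  simpa [and_assoc] using hyG

lemma isCore_iff_subClosed (t : ℕ) : l.IsCore t ↔ SubClosed t l.betaSet := by
  constructor
  · intro hcore x hx htx
    rcases Nat.eq_zero_or_pos t with rfl | ht
    · simpa using hx
    by_contra hxt
    obtain ⟨i, hi, rfl⟩ := l.mem_betaSet.mp hx
    obtain ⟨j, hj1, hj, hgap⟩ := l.exists_colGap_eq hi (by omega) hxt
    have := l.beta_eq_hook_add_colGap hi hj1 hj
    refine hcore i j hi hj1 (by rwa [List.getD_eq_getElem _ _ hi]) ⟨1, ?_⟩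
    omega
  · rintro hB i j hi hj1 hj ⟨q, hq⟩
    rw [List.getD_eq_getElem _ _ hi] at hj
    have hbeta := l.beta_eq_hook_add_colGap hi hj1 hj
    have hmem := hB.sub_mul_mem (l.beta_mem_betaSet hi) q (by rw [mul_comm]; omega)
    rw [show l.beta i - q * t = l.colGap j by rw [mul_comm]; omega] at hmem
    exact l.colGap_notMem_betaSet hj1 hmem

lemma distinctParts_iff : l.DistinctParts ↔ ∀ x ∈ l.betaSet, x + 1 ∉ l.betaSet := by
  constructor
  · intro hd x hx hx1
    obtain ⟨i, hi, rfl⟩ := l.mem_betaSet.mp hx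
    obtain ⟨k, hk, hki⟩ := l.mem_betaSet.mp hx1
    rcases lt_trichotomy k i with hlt | rfl | hlt
    · have := List.pairwise_iff_getElem.mp hd k i (hlt.trans hi) hi hlt
      rw [l.beta_of_lt hi, l.beta_of_lt hk] at hki
      omega
    · omega
    · have := l.beta_lt_beta hlt hk
      omega
  · refine fun h => List.pairwise_iff_getElem.mpr fun i k hi hk hik => ?_
    have hi1 : i + 1 < l.parts.length := by omega
    have hgap : l.beta (i + 1) + 1 ≠ l.beta i := fun he =>
      h _ (l.beta_mem_betaSet hi1) (he ▸ l.beta_mem_betaSet hi)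
    have := l.beta_lt_beta (Nat.lt_succ_self i) hi1
    have := l.getElem_le_getElem (show i + 1 ≤ k by omega) hk
    rw [l.beta_of_lt hi, l.beta_of_lt hi1] at *
    omega

def cons (a : ℕ) (ha : 0 < a) (hl : ∀ p ∈ l.parts, p ≤ a) : Partn where
  parts := a :: l.parts
  pos := List.forall_mem_cons.mpr ⟨ha, l.pos⟩
  sorted := List.pairwise_cons.mpr ⟨hl, l.sorted⟩

lemma betaSet_cons {a : ℕ} (ha : 0 < a) (hl : ∀ p ∈ l.parts, p ≤ a) :
    (l.cons a ha hl).betaSet = insert (a + l.parts.length) l.betaSet := by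
  ext x
  simp only [mem_betaSet, Finset.mem_insert, cons, beta, List.length_cons]
  constructor
  · rintro ⟨_ | i, hi, rfl⟩
    · simp
    · exact Or.inr ⟨i, by omega, by rw [List.getD_cons_succ]; omega⟩
  · rintro (rfl | ⟨i, hi, rfl⟩)
    · exact ⟨0, by simp⟩
    · exact ⟨i + 1, by omega, by rw [List.getD_cons_succ]; omega⟩

lemma add_length_le_of_mem_parts {p : ℕ} (hp : p ∈ l.parts) {a : ℕ}
    (ha : ∀ x ∈ l.betaSet, x < a) : p + l.parts.length ≤ a := by
  obtain ⟨k, hk, rfl⟩ := List.getElem_of_mem hp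
  have h0 : 0 < l.parts.length := by omega
  have := ha _ (l.beta_mem_betaSet h0)
  have := l.getElem_le_getElem (Nat.zero_le k) hk
  rw [l.beta_of_lt h0] at *
  omega

lemma exists_betaSet_eq (B : Finset ℕ) (hB : 0 ∉ B) : ∃ l : Partn, l.betaSet = B := by
  induction B using Finset.induction_on_max with
  | empty => exact ⟨⟨[], by simp, by simp⟩, rfl⟩
  | insert a B hlt ih =>
    obtain ⟨l, rfl⟩ := ih fun h => hB (Finset.mem_insert_of_mem h)
    have hcard : l.parts.length < a := by
      have hsub : l.betaSet ⊆ Finset.Ioo 0 a := fun x hx =>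
        Finset.mem_Ioo.mpr ⟨Nat.pos_of_ne_zero (by rintro rfl; exact l.zero_notMem_betaSet hx),
          hlt x hx⟩
      have := Finset.card_le_card hsub
      rw [l.card_betaSet, Nat.card_Ioo] at this
      have : a ≠ 0 := by rintro rfl; exact hB (Finset.mem_insert_self _ _)
      omega
    refine ⟨l.cons (a - l.parts.length) (by omega) fun p hp => ?_, ?_⟩
    · have := l.add_length_le_of_mem_parts hp hlt
      omega
    · rw [betaSet_cons, Nat.sub_add_cancel hcard.le]

end

lemma size_add_length_of_betaSet_eq_insert {l mu : Partn} {w : ℕ}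
    (h : mu.betaSet = insert w l.betaSet) (hw : w ∉ l.betaSet) :
    mu.size + l.parts.length = l.size + w := by
  have hlen : mu.parts.length = l.parts.length + 1 := by
    rw [← card_betaSet, ← card_betaSet, h, Finset.card_insert_of_notMem hw]
  have hmu := mu.sum_betaSet
  rw [h, Finset.sum_insert hw, l.sum_betaSet, hlen, Finset.sum_range_succ] at hmu
  omega

lemma size_add_size_of_betaSet_eq {l mu nu : Partn} {y d : ℕ} (hy : y ∈ l.betaSet)
    (hyd : y + d ∉ l.betaSet) (hmu : mu.betaSet = insert (y + d) l.betaSet)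
    (hnu : nu.betaSet = l.betaSet.erase y) : mu.size + nu.size + 1 = 2 * l.size + d := by
  have hl : l.betaSet = insert y nu.betaSet := by rw [hnu, Finset.insert_erase hy]
  have hlen : l.parts.length = nu.parts.length + 1 := by
    rw [← card_betaSet, ← card_betaSet, hnu, Finset.card_erase_add_one hy]
  have := size_add_length_of_betaSet_eq_insert hmu hyd
  have := size_add_length_of_betaSet_eq_insert hl (by simp [hnu])
  omega

structure IsDistinctCoreBetaSet (s r : ℕ) (B : Finset ℕ) : Prop where
  zero_notMem : 0 ∉ B
  add_one_notMem : ∀ x ∈ B, x + 1 ∉ B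
  subClosed_left : SubClosed s B
  subClosed_right : SubClosed r B

lemma isDistinctCoreBetaSet_betaSet_iff {s r : ℕ} (l : Partn) :
    IsDistinctCoreBetaSet s r l.betaSet ↔ l.IsCore s ∧ l.IsCore r ∧ l.DistinctParts := by
  rw [isCore_iff_subClosed, isCore_iff_subClosed, distinctParts_iff]
  exact ⟨fun h => ⟨h.3, h.4, h.2⟩, fun h => ⟨l.zero_notMem_betaSet, h.2.2, h.1, h.2.1⟩⟩

lemma IsDistinctCoreBetaSet.exists_betaSet_eq {s r : ℕ} {B : Finset ℕ}
    (hB : IsDistinctCoreBetaSet s r B) :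
    ∃ l : Partn, l.betaSet = B ∧ (l.IsCore s ∧ l.IsCore r ∧ l.DistinctParts) := by
  obtain ⟨l, rfl⟩ := Partn.exists_betaSet_eq B hB.zero_notMem
  exact ⟨l, rfl, (isDistinctCoreBetaSet_betaSet_iff l).mp hB⟩

namespace IsDistinctCoreBetaSet

lemma insert_of_isolated {s r w : ℕ} {B : Finset ℕ} (hB : IsDistinctCoreBetaSet s r B)
    (hw0 : w ≠ 0) (hwsucc : w + 1 ∉ B) (hwpred : w - 1 ∉ B) (hs : s ≤ w → w - s ∈ B)
    (hr : r ≤ w → w - r ∈ B) : IsDistinctCoreBetaSet s r (insert w B) where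
  zero_notMem := by simpa [Ne.symm hw0] using hB.zero_notMem
  add_one_notMem x hx := by
    simp only [Finset.mem_insert, not_or]
    rcases Finset.mem_insert.mp hx with rfl | hx
    · exact ⟨by omega, hwsucc⟩
    · refine ⟨fun h => hwpred ?_, hB.add_one_notMem x hx⟩
      rwa [← h, Nat.add_sub_cancel]
  subClosed_left := hB.subClosed_left.insert hs
  subClosed_right := hB.subClosed_right.insert hr

lemma erase {s r y : ℕ} {B : Finset ℕ} (hB : IsDistinctCoreBetaSet s r B) (hs : y + s ∉ B)
    (hr : y + r ∉ B) : IsDistinctCoreBetaSet s r (B.erase y) where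
  zero_notMem h := hB.zero_notMem (Finset.mem_of_mem_erase h)
  add_one_notMem x hx h :=
    hB.add_one_notMem x (Finset.mem_of_mem_erase hx) (Finset.mem_of_mem_erase h)
  subClosed_left := hB.subClosed_left.erase hs
  subClosed_right := hB.subClosed_right.erase hr

variable {t m : ℕ} {B : Finset ℕ}

lemma card_filter_mod_le (hB : IsDistinctCoreBetaSet t (m * t + 1) B) {j : ℕ} (hj1 : 1 ≤ j)
    (hjt : j < t) : (B.filter (· % t = j)).card ≤ m := by
  by_contra! hm
  have hmem := (hB.subClosed_left.add_mul_mem_iff hjt m).mpr hm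
  have hj := (hB.subClosed_left.add_mul_mem_iff hjt 0).mpr (by omega)
  have hpred := hB.subClosed_right _ hmem (by omega)
  rw [show j + m * t - (m * t + 1) = j - 1 by omega] at hpred
  rcases hj1.eq_or_lt with rfl | hj1
  · exact hB.zero_notMem hpred
  · exact hB.add_one_notMem _ hpred (by simpa [show j - 1 + 1 = j by omega] using hj)

lemma lt_mul_of_mem (hB : IsDistinctCoreBetaSet t (m * t + 1) B) {x : ℕ} (hx : x ∈ B) :
    x < m * t := by
  rcases Nat.eq_zero_or_pos t with rfl | ht
  · exact absurd (hB.subClosed_right.sub_mul_mem hx x (by simp)) (by simpa using hB.zero_notMem)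
  have hdiv : x % t + x / t * t = x := by rw [mul_comm]; exact Nat.mod_add_div x t
  have hj1 : x % t ≠ 0 := fun h0 => hB.zero_notMem (by
    simpa [show x - x / t * t = 0 by omega] using
      hB.subClosed_left.sub_mul_mem hx (x / t) (by omega))
  have hlt := (hB.subClosed_left.add_mul_mem_iff (Nat.mod_lt x ht) (x / t)).mp (by rwa [hdiv])
  have hle := hB.card_filter_mod_le (Nat.one_le_iff_ne_zero.mpr hj1) (Nat.mod_lt x ht)
  have := Nat.mul_le_mul_right t (show x / t + 1 ≤ m by omega)
  rw [add_mul, one_mul] at this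
  have := Nat.mod_lt x ht
  omega

lemma exists_insert_erase (hB : IsDistinctCoreBetaSet t (m * t + 1) B) {i : ℕ} (hi1 : 1 ≤ i)
    (hit : i < t) (h0 : (B.filter (· % t = i)).card ≠ 0)
    (hm : (B.filter (· % t = i)).card ≠ m) :
    ∃ y ∈ B, y + t ∉ B ∧ IsDistinctCoreBetaSet t (m * t + 1) (insert (y + t) B) ∧
      IsDistinctCoreBetaSet t (m * t + 1) (B.erase y) := by
  set n := (B.filter (· % t = i)).card
  have hmem := hB.subClosed_left.add_mul_mem_iff hit
  have hn : n < m := (hB.card_filter_mod_le hi1 hit).lt_of_ne hm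
  have hi : i ∈ B := by simpa using (hmem 0).mpr (by omega)
  have hy : i + (n - 1) * t ∈ B := (hmem _).mpr (by omega)
  have hw : i + (n - 1) * t + t = i + n * t := by
    rw [add_assoc, ← Nat.succ_mul, Nat.succ_eq_add_one, Nat.sub_add_cancel (by omega)]
  have hwB : i + n * t ∉ B := fun h => lt_irrefl n ((hmem n).mp h)
  have hwm : i + n * t < m * t := by
    have := Nat.mul_le_mul_right t (show n + 1 ≤ m by omega)
    rw [add_mul, one_mul] at this
    omega
  refine ⟨_, hy, hw ▸ hwB, ?_, hB.erase (hw ▸ hwB) fun h => ?_⟩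
  · rw [hw]
    -- subtracting `n * t` would bring a bead at `i + n * t ± 1` next to the bead at `i`
    refine hB.insert_of_isolated (by omega) (fun h => ?_) (fun h => ?_)
      (fun _ => by rwa [← hw, Nat.add_sub_cancel]) (fun h => by omega)
    · have := hB.subClosed_left.sub_mul_mem h n (by omega)
      exact hB.add_one_notMem i hi (by rwa [show i + n * t + 1 - n * t = i + 1 by omega] at this)
    · have := hB.subClosed_left.sub_mul_mem h n (by omega)
      refine hB.add_one_notMem (i - 1) ?_ (by rwa [Nat.sub_add_cancel hi1])
      rwa [show i + n * t - 1 - n * t = i - 1 by omega] at this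
  · have := hB.lt_mul_of_mem h
    omega

end IsDistinctCoreBetaSet

end Partn

theorem nFn_of_largest_t_mt_add_one_general (t m : ℕ) (lam : Partn)
    (hlam : (lam.IsCore t ∧ lam.IsCore (m * t + 1) ∧ lam.DistinctParts))
    (hmax : ∀ mu : Partn, (mu.IsCore t ∧ mu.IsCore (m * t + 1) ∧ mu.DistinctParts) → mu.size ≤ lam.size) :
    ∀ i : ℕ, 1 ≤ i → i ≤ t - 1 → Partn.nFn t i lam = 0 ∨ Partn.nFn t i lam = m := by
  intro i hi1 hit
  by_contra! hi
  have hB := (Partn.isDistinctCoreBetaSet_betaSet_iff lam).mpr hlam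
  obtain ⟨y, hy, hyt, hins, hers⟩ := hB.exists_insert_erase hi1 (by omega) hi.1 hi.2
  obtain ⟨mu, hmu, hmu_core⟩ := hins.exists_betaSet_eq
  obtain ⟨nu, hnu, hnu_core⟩ := hers.exists_betaSet_eq
  have := Partn.size_add_size_of_betaSet_eq hy hyt hmu hnu
  have := hmax mu hmu_core
  have := hmax nu hnu_core
  omega

/-- For a maximal-size `(t, mt+1)`-core partition with distinct parts, each `nᵢ(λ)`
is `0` or `m`. -/
theorem nFn_of_largest_t_mt_add_one (t m : ℕ) (ht : 2 ≤ t) (hm : 1 ≤ m) (lam : Partn)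
    (hlam : (lam.IsCore t ∧ lam.IsCore (m * t + 1) ∧ lam.DistinctParts))
    (hmax : ∀ mu : Partn, (mu.IsCore t ∧ mu.IsCore (m * t + 1) ∧ mu.DistinctParts) → mu.size ≤ lam.size) :
    ∀ i : ℕ, 1 ≤ i → i ≤ t - 1 → Partn.nFn t i lam = 0 ∨ Partn.nFn t i lam = m :=
  nFn_of_largest_t_mt_add_one_general t m lam hlam hmax
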